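/- arXiv:1910.01797 — 3 statements merged into one kernel-verified Lean document; each statement's English description precedes it below -/
import Mathlib

section
/- For a totally disconnected locally compact group G, the function d(U,V) = log([U : U ∩ V] · [V : U ∩ V]) defines a metric on the set COS(G) of compact open subgroups of G. -/
/-- The distance `d(U,V) = log([U : U ∩ V] · [V : U ∩ V])` on compact open subgroups. -/
noncomputable def cosDist {G : Type*} [Group G] (U V : Subgroup G) : ℝ :=
  Real.log ((V.relIndex U * U.relIndex V : ℕ))

/-! Open subgroups have finite index in compact ones, so all the indices involved are finite and
positive. With `H.relIndex K = [K : H ∩ K]`, the triangle inequality comes from the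
submultiplicativity `[U : W ∩ U] ≤ [V : W ∩ V] · [U : V ∩ U]`, obtained by passing through
`W ∩ V ∩ U`. -/

namespace Subgroup

variable {G : Type*} [Group G]

theorem relIndex_ne_zero_of_isCompact_of_isOpen [TopologicalSpace G] [IsTopologicalGroup G]
    {H K : Subgroup G} (hK : IsCompact (K : Set G)) (hH : IsOpen (H : Set G)) :
    H.relIndex K ≠ 0 := by
  have : CompactSpace K := isCompact_iff_compactSpace.mp hK
  have : Finite (K ⧸ H.subgroupOf K) :=
    quotient_finite_of_isOpen _ (hH.preimage continuous_subtype_val)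
  exact index_ne_zero_of_finite

theorem relIndex_le_relIndex_mul_relIndex {H K L : Subgroup G} (hHK : H.relIndex K ≠ 0)
    (hKL : K.relIndex L ≠ 0) : H.relIndex L ≤ H.relIndex K * K.relIndex L :=
  calc H.relIndex L ≤ (H ⊓ K).relIndex L :=
        relIndex_le_of_le_left inf_le_left
          (relIndex_inf_ne_zero (relIndex_ne_zero_trans hHK hKL) hKL)
    _ = H.relIndex (K ⊓ L) * K.relIndex L := (relIndex_inf_mul_relIndex H K L).symm
    _ ≤ H.relIndex K * K.relIndex L :=
        Nat.mul_le_mul_right _ (relIndex_le_of_le_right inf_le_left hHK)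

end Subgroup

section cosDist

open Subgroup

variable {G : Type*} [Group G]

theorem cosDist_nonneg (U V : Subgroup G) : 0 ≤ cosDist U V :=
  Real.log_natCast_nonneg _

theorem cosDist_comm (U V : Subgroup G) : cosDist U V = cosDist V U := by
  rw [cosDist, cosDist, mul_comm]

theorem cosDist_eq_zero_iff {U V : Subgroup G} (hVU : V.relIndex U ≠ 0)
    (hUV : U.relIndex V ≠ 0) : cosDist U V = 0 ↔ U = V := by
  have hpos : (0 : ℝ) < (V.relIndex U * U.relIndex V : ℕ) := by positivity
  rw [cosDist, Real.log_eq_zero, or_iff_right hpos.ne',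
    or_iff_left (neg_one_lt_zero.trans hpos).ne', Nat.cast_eq_one, mul_eq_one,
    relIndex_eq_one, relIndex_eq_one, le_antisymm_iff]

theorem cosDist_triangle {U V W : Subgroup G} (hVU : V.relIndex U ≠ 0) (hUV : U.relIndex V ≠ 0)
    (hVW : V.relIndex W ≠ 0) (hWV : W.relIndex V ≠ 0) :
    cosDist U W ≤ cosDist U V + cosDist V W := by
  have hWU := relIndex_le_relIndex_mul_relIndex hWV hVU
  have hUW := relIndex_le_relIndex_mul_relIndex hUV hVW
  have hpos : 0 < W.relIndex U * U.relIndex W := by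
    have := relIndex_ne_zero_trans hWV hVU
    have := relIndex_ne_zero_trans hUV hVW
    positivity
  rw [cosDist, cosDist, cosDist, ← Real.log_mul (by positivity) (by positivity)]
  refine Real.log_le_log (by exact_mod_cast hpos) ?_
  rw [← Nat.cast_mul, Nat.cast_le]
  calc W.relIndex U * U.relIndex W
      ≤ (W.relIndex V * V.relIndex U) * (U.relIndex V * V.relIndex W) := Nat.mul_le_mul hWU hUW
    _ = (V.relIndex U * U.relIndex V) * (W.relIndex V * V.relIndex W) := by ring

end cosDist

theorem cosDist_is_metric_general {G : Type*} [Group G] [TopologicalSpace G] [IsTopologicalGroup G] :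
    (∀ U V : Subgroup G, IsCompact (U : Set G) → IsOpen (U : Set G) →
      IsCompact (V : Set G) → IsOpen (V : Set G) →
      0 ≤ cosDist U V ∧ cosDist U V = cosDist V U ∧ (cosDist U V = 0 ↔ U = V)) ∧
    (∀ U V W : Subgroup G, IsCompact (U : Set G) → IsOpen (U : Set G) →
      IsCompact (V : Set G) → IsOpen (V : Set G) →
      IsCompact (W : Set G) → IsOpen (W : Set G) →
      cosDist U W ≤ cosDist U V + cosDist V W) := by
  have hfin {H K : Subgroup G} (hK : IsCompact (K : Set G)) (hH : IsOpen (H : Set G)) :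
      H.relIndex K ≠ 0 := Subgroup.relIndex_ne_zero_of_isCompact_of_isOpen hK hH
  refine ⟨fun U V hUc hUo hVc hVo => ?_, fun U V W hUc hUo hVc hVo hWc hWo => ?_⟩
  · exact ⟨cosDist_nonneg U V, cosDist_comm U V,
      cosDist_eq_zero_iff (hfin hUc hVo) (hfin hVc hUo)⟩
  · exact cosDist_triangle (hfin hUc hVo) (hfin hVc hUo) (hfin hWc hVo) (hfin hVc hWo)

/-- For a t.d.l.c. group `G`, `cosDist` is a metric on the set of compact open subgroups:
it is nonnegative, symmetric, vanishes exactly on the diagonal, and satisfies the triangle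
inequality. -/
theorem cosDist_is_metric {G : Type*} [Group G] [TopologicalSpace G] [IsTopologicalGroup G]
    [LocallyCompactSpace G] [TotallyDisconnectedSpace G] [T2Space G] :
    (∀ U V : Subgroup G, IsCompact (U : Set G) → IsOpen (U : Set G) →
      IsCompact (V : Set G) → IsOpen (V : Set G) →
      0 ≤ cosDist U V ∧ cosDist U V = cosDist V U ∧ (cosDist U V = 0 ↔ U = V)) ∧
    (∀ U V W : Subgroup G, IsCompact (U : Set G) → IsOpen (U : Set G) →
      IsCompact (V : Set G) → IsOpen (V : Set G) →
      IsCompact (W : Set G) → IsOpen (W : Set G) →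
      cosDist U W ≤ cosDist U V + cosDist V W) :=
  cosDist_is_metric_general
end

section
/- Let G be a t.d.l.c. group and α an automorphism of G. Then α is uniscalar (i.e., s(α) = 1 = s(α⁻¹)) if and only if there exists a compact open subgroup U with α(U) = U. -/
/-- The scale of an automorphism `α` of a t.d.l.c. group:
`s(α) = min{[α(U) : α(U) ∩ U] : U a compact open subgroup}`. -/
noncomputable def autScale {G : Type*} [Group G] [TopologicalSpace G] (α : G ≃* G) : ℕ :=
  sInf {n : ℕ | ∃ U : Subgroup G, IsCompact (U : Set G) ∧ IsOpen (U : Set G) ∧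
    n = U.relIndex (U.map α.toMonoidHom)}

/-!
`[α(U) : α(U) ∩ U] = 1` exactly when `α(U) ≤ U`, and this index is never `0` because `α(U)` is
compact and `U` is open; so `s(α) = 1` iff some compact open subgroup `U` has `α(U) ≤ U`.
A continuous automorphism scales Haar measure `μ` by a constant `Δ(α)`. Such a `U` forces
`Δ(α) ≤ 1`, and a `V` with `α⁻¹(V) ≤ V` forces `Δ(α) ≥ 1`. Hence `μ(α(U)) = μ(U)`, so the open
set `U \ α(U)` is null, hence empty.
-/

open MeasureTheory Measure

lemma Subgroup.relIndex_ne_zero_of_isOpen_of_isCompact {G : Type*} [Group G]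
    [TopologicalSpace G] [IsTopologicalGroup G] {H K : Subgroup G} (hH : IsOpen (H : Set G))
    (hK : IsCompact (K : Set G)) : H.relIndex K ≠ 0 := by
  have : CompactSpace K := isCompact_iff_compactSpace.mp hK
  have : Finite (K ⧸ H.subgroupOf K) :=
    Subgroup.quotient_finite_of_isOpen _ (hH.preimage continuous_subtype_val)
  exact Subgroup.index_ne_zero_of_finite

section autScale

variable {G : Type*} [Group G] [TopologicalSpace G]

lemma exists_map_le_of_autScale_eq_one {α : G ≃* G} (h : autScale α = 1) :
    ∃ U : Subgroup G, IsCompact (U : Set G) ∧ IsOpen (U : Set G) ∧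
      U.map α.toMonoidHom ≤ U := by
  rw [autScale] at h
  obtain ⟨U, hUc, hUo, hU⟩ := h ▸ Nat.sInf_mem (Nat.nonempty_of_pos_sInf (h ▸ one_pos))
  exact ⟨U, hUc, hUo, Subgroup.relIndex_eq_one.mp hU.symm⟩

lemma autScale_eq_one_of_map_le [IsTopologicalGroup G] {α : G ≃* G} (hα : Continuous α)
    {U : Subgroup G} (hUc : IsCompact (U : Set G)) (hUo : IsOpen (U : Set G))
    (hU : U.map α.toMonoidHom ≤ U) : autScale α = 1 := by
  have hone : 1 ∈ {n : ℕ | ∃ U : Subgroup G, IsCompact (U : Set G) ∧ IsOpen (U : Set G) ∧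
      n = U.relIndex (U.map α.toMonoidHom)} :=
    ⟨U, hUc, hUo, (Subgroup.relIndex_eq_one.mpr hU).symm⟩
  refine le_antisymm (Nat.sInf_le hone) (Nat.one_le_iff_ne_zero.mpr fun h0 => ?_)
  rw [autScale] at h0
  obtain ⟨W, hWc, hWo, hW⟩ := h0 ▸ Nat.sInf_mem ⟨1, hone⟩
  have hαW : IsCompact ((W.map α.toMonoidHom : Subgroup G) : Set G) := by
    rw [Subgroup.coe_map]
    exact hWc.image hα
  exact Subgroup.relIndex_ne_zero_of_isOpen_of_isCompact hWo hαW hW.symm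

end autScale

namespace MeasureTheory

variable {G : Type*} [Group G] [TopologicalSpace G] [MeasurableSpace G] [BorelSpace G]
  [IsTopologicalGroup G] [LocallyCompactSpace G]

lemma measure_image_eq_mulEquivHaarChar_smul (μ : Measure G) [IsHaarMeasure μ] [Regular μ]
    (φ : G ≃ₜ* G) (X : Set G) : μ (φ '' X) = mulEquivHaarChar φ • μ X := by
  rw [← mulEquivHaarChar_smul_preimage μ φ, Set.preimage_image_eq X φ.injective]

lemma mulEquivHaarChar_le_one_of_image_subset {φ : G ≃ₜ* G} {X : Set G} (hXc : IsCompact X)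
    (hXi : (interior X).Nonempty) (h : φ '' X ⊆ X) : mulEquivHaarChar φ ≤ 1 := by
  have hle : mulEquivHaarChar φ • haar X ≤ haar X := by
    rw [← measure_image_eq_mulEquivHaarChar_smul]
    exact measure_mono h
  rw [ENNReal.smul_def, smul_eq_mul] at hle
  have hle_one : (mulEquivHaarChar φ : ENNReal) ≤ 1 :=
    (ENNReal.mul_le_mul_iff_left (measure_pos_of_nonempty_interior haar hXi).ne'
      hXc.measure_lt_top.ne).mp (by rwa [one_mul])
  exact_mod_cast hle_one

lemma mulEquivHaarChar_eq_one_of_image_subset {φ : G ≃ₜ* G} {X Y : Set G}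
    (hXc : IsCompact X) (hXi : (interior X).Nonempty) (hX : φ '' X ⊆ X)
    (hYc : IsCompact Y) (hYi : (interior Y).Nonempty) (hY : φ.symm '' Y ⊆ Y) :
    mulEquivHaarChar φ = 1 := by
  have hsymm := mulEquivHaarChar_le_one_of_image_subset hYc hYi hY
  rw [mulEquivHaarChar_symm, inv_le_one₀ (mulEquivHaarChar_pos φ)] at hsymm
  exact le_antisymm (mulEquivHaarChar_le_one_of_image_subset hXc hXi hX) hsymm

lemma image_eq_of_mulEquivHaarChar_eq_one {φ : G ≃ₜ* G} (hφ : mulEquivHaarChar φ = 1)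
    {X : Set G} (hXc : IsCompact X) (hXo : IsOpen X) (hXcl : IsClosed X) (h : φ '' X ⊆ X) :
    φ '' X = X := by
  have himage : IsClosed (φ '' X) := φ.toHomeomorph.isClosedMap X hXcl
  have hnull : haar (X \ φ '' X) = 0 := by
    rw [measure_sdiff h himage.measurableSet.nullMeasurableSet
      (measure_ne_top_of_subset h hXc.measure_lt_top.ne),
      measure_image_eq_mulEquivHaarChar_smul, hφ, one_smul, tsub_self]
  have hempty := ((hXo.sdiff himage).measure_eq_zero_iff haar).mp hnull
  exact h.antisymm (Set.sdiff_eq_empty.mp hempty)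

end MeasureTheory

theorem uniscalar_iff_stabilizes_compact_open_general {G : Type*} [Group G] [TopologicalSpace G]
    [IsTopologicalGroup G] [LocallyCompactSpace G]
    (α : G ≃* G) (hα : Continuous α) (hα' : Continuous α.symm) :
    (autScale α = 1 ∧ autScale α.symm = 1) ↔
      ∃ U : Subgroup G, IsCompact (U : Set G) ∧ IsOpen (U : Set G) ∧
        U.map α.toMonoidHom = U := by
  constructor
  · rintro ⟨hs, hs'⟩
    obtain ⟨U, hUc, hUo, hαU⟩ := exists_map_le_of_autScale_eq_one hs
    obtain ⟨V, hVc, hVo, hαV⟩ := exists_map_le_of_autScale_eq_one hs'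
    borelize G
    let φ : G ≃ₜ* G := ⟨α, hα, hα'⟩
    have hφU : φ '' U ⊆ U := hαU
    have hφV : φ.symm '' V ⊆ V := hαV
    have hUi : (interior (U : Set G)).Nonempty := by rw [hUo.interior_eq]; exact ⟨1, U.one_mem⟩
    have hVi : (interior (V : Set G)).Nonempty := by rw [hVo.interior_eq]; exact ⟨1, V.one_mem⟩
    have hφ : mulEquivHaarChar φ = 1 :=
      mulEquivHaarChar_eq_one_of_image_subset hUc hUi hφU hVc hVi hφV
    refine ⟨U, hUc, hUo, SetLike.coe_injective ?_⟩
    exact image_eq_of_mulEquivHaarChar_eq_one hφ hUc hUo (U.isClosed_of_isOpen hUo) hφU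
  · rintro ⟨U, hUc, hUo, hU⟩
    exact ⟨autScale_eq_one_of_map_le hα hUc hUo hU.le,
      autScale_eq_one_of_map_le hα' hUc hUo ((Subgroup.map_symm_eq_iff_map_eq _).mpr hU).le⟩

/-- For a t.d.l.c. group `G` and a topological automorphism `α`, `α` is uniscalar
(`s(α) = 1 = s(α⁻¹)`) iff there is a compact open subgroup `U` with `α(U) = U`. -/
theorem uniscalar_iff_stabilizes_compact_open {G : Type*} [Group G] [TopologicalSpace G]
    [IsTopologicalGroup G] [LocallyCompactSpace G] [TotallyDisconnectedSpace G] [T2Space G]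
    (α : G ≃* G) (hα : Continuous α) (hα' : Continuous α.symm) :
    (autScale α = 1 ∧ autScale α.symm = 1) ↔
      ∃ U : Subgroup G, IsCompact (U : Set G) ∧ IsOpen (U : Set G) ∧
        U.map α.toMonoidHom = U :=
  uniscalar_iff_stabilizes_compact_open_general α hα hα'
end

section
/- Let G be a t.d.l.c. group acting vertex transitively on a connected locally finite δ-hyperbolic graph Γ with compact open vertex stabilisers, and let g, h ∈ G be hyperbolic isometries of Γ with ω₊(g) ≠ ω₊(h). Then for each vertex v there exists K ∈ ℕ such that for all n, m ∈ ℕ, the orbit of v under the pointwise stabiliser of the pair {gⁿ(v), hᵐ(v)} has size at most K. -/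
/-- The Gromov product on a graph, with respect to the graph metric. -/
noncomputable def gGP {V : Type*} (Γ : SimpleGraph V) (p x y : V) : ℝ :=
  ((Γ.dist p x : ℝ) + (Γ.dist p y : ℝ) - (Γ.dist x y : ℝ)) / 2

/-- `Γ` is `δ`-hyperbolic: the four-point Gromov product condition holds. -/
def GraphHyp {V : Type*} (Γ : SimpleGraph V) (δ : ℝ) : Prop :=
  ∀ p x y z : V, min (gGP Γ p x z) (gGP Γ p y z) - δ ≤ gGP Γ p x y

/-- The sequence `u` of vertices converges at infinity (to a point of the Gromov
boundary `∂Γ`). -/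
def gConvAtInf {V : Type*} (Γ : SimpleGraph V) (p : V) (u : ℕ → V) : Prop :=
  ∀ M : ℝ, ∃ N : ℕ, ∀ i j : ℕ, N ≤ i → N ≤ j → M ≤ gGP Γ p (u i) (u j)

/-- The sequences `u` and `v` of vertices converge to the same boundary point of `∂Γ`. -/
def gEquivAtInf {V : Type*} (Γ : SimpleGraph V) (p : V) (u v : ℕ → V) : Prop :=
  ∀ M : ℝ, ∃ N : ℕ, ∀ i j : ℕ, N ≤ i → N ≤ j → M ≤ gGP Γ p (u i) (v j)

/-- The scale function on a t.d.l.c. group: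
`s(g) = min{[gUg⁻¹ : gUg⁻¹ ∩ U] : U compact open subgroup}`. -/
noncomputable def scale {G : Type*} [Group G] [TopologicalSpace G] (g : G) : ℕ :=
  sInf {n : ℕ | ∃ U : Subgroup G, IsCompact (U : Set G) ∧ IsOpen (U : Set G) ∧
    n = U.relIndex (U.map (MulAut.conj g).toMonoidHom)}

/-!
Fix a base vertex `v`. Since `gⁿv → ω₊(g)` and `hᵐv → ω₊(h)` with `ω₊(g) ≠ ω₊(h)`, hyperbolicity
bounds the Gromov products `(gⁿv | hᵐv)_v` uniformly in `n, m`. An element `a` fixing both `gⁿv`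
and `hᵐv` moves `v` to a point `av` that is equidistant with `v` from each of them, so
`(gⁿv | av)_v = (hᵐv | av)_v = d(v, av)/2`, and the four-point condition gives
`d(v, av) ≤ 2 (gⁿv | hᵐv)_v + 2δ`. The orbit thus lies in a fixed ball around `v`, which is
finite because `Γ` is locally finite.
-/

namespace SimpleGraph

variable {V W : Type*} {G : SimpleGraph V} {G' : SimpleGraph W}

theorem Hom.dist_le (f : G →g G') {u v : V} (huv : G.Reachable u v) :
    G'.dist (f u) (f v) ≤ G.dist u v := by
  obtain ⟨p, hp⟩ := huv.exists_walk_length_eq_dist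
  simpa [hp] using G'.dist_le (p.map f)

theorem Connected.finite_setOf_dist_le (hconn : G.Connected)
    (hlf : ∀ v : V, (G.neighborSet v).Finite) (v : V) (R : ℕ) :
    {w : V | G.dist v w ≤ R}.Finite := by
  induction R with
  | zero => simp [hconn.dist_eq_zero_iff]
  | succ R ih =>
    refine (ih.biUnion fun u _ => (hlf u).insert u).subset ?_
    intro w hw
    obtain ⟨p, hp⟩ := hconn.exists_walk_length_eq_dist v w
    -- the vertex of `p` at position `R` is within `R` of `v` and equal or adjacent to `w`
    refine Set.mem_biUnion (x := p.getVert R) ?_ ?_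
    · simpa using (G.dist_le (p.take R)).trans (by simp [Walk.take_length])
    · rcases Nat.lt_or_ge R p.length with hR | hR
      · have hlen : R + 1 = p.length := by
          have : G.dist v w ≤ R + 1 := hw
          omega
        exact Or.inr (by simpa [hlen, Walk.getVert_length] using p.adj_getVert_succ hR)
      · exact Or.inl (p.getVert_of_length_le hR).symm

theorem Connected.dist_smul {H : Type*} [Group H] [MulAction H V] (hconn : G.Connected)
    (hact : ∀ (g : H) (u w : V), G.Adj u w → G.Adj (g • u) (g • w)) (a : H) (x y : V) :
    G.dist (a • x) (a • y) = G.dist x y := by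
  let f (b : H) : G →g G := ⟨(b • ·), hact b _ _⟩
  refine le_antisymm ((f a).dist_le (hconn x y)) ?_
  simpa [f] using (f a⁻¹).dist_le (hconn (a • x) (a • y))

end SimpleGraph

section Gromov

variable {V : Type*} {Γ : SimpleGraph V}

theorem gGP_comm (p x y : V) : gGP Γ p x y = gGP Γ p y x := by
  unfold gGP; rw [SimpleGraph.dist_comm (u := x)]; ring

theorem gGP_le_dist_left (hconn : Γ.Connected) (p x y : V) : gGP Γ p x y ≤ Γ.dist p x := by
  have : (Γ.dist p y : ℝ) ≤ Γ.dist p x + Γ.dist x y := by exact_mod_cast hconn.dist_triangle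
  unfold gGP; linarith

theorem gGP_le_dist_right (hconn : Γ.Connected) (p x y : V) : gGP Γ p x y ≤ Γ.dist p y :=
  gGP_comm (Γ := Γ) p x y ▸ gGP_le_dist_left hconn p y x

theorem gGP_eq_half_dist_of_dist_eq {p x z : V} (hx : Γ.dist x z = Γ.dist x p) :
    gGP Γ p x z = Γ.dist p z / 2 := by
  unfold gGP; rw [hx, SimpleGraph.dist_comm (u := x)]; ring

namespace GraphHyp

variable {δ : ℝ}

theorem nonneg [Nonempty V] (hhyp : GraphHyp Γ δ) : 0 ≤ δ := by
  obtain ⟨p⟩ := ‹Nonempty V›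
  simpa [gGP] using hhyp p p p p

theorem min_min_sub_two_mul_le (hhyp : GraphHyp Γ δ) (p x y z w : V) :
    min (min (gGP Γ p x y) (gGP Γ p y z)) (gGP Γ p z w) - 2 * δ ≤ gGP Γ p x w := by
  have : Nonempty V := ⟨p⟩
  have hyw := hhyp p y w z
  have hxw := hhyp p x w y
  rw [gGP_comm p w z] at hyw
  rw [gGP_comm p w y] at hxw
  have := hhyp.nonneg
  grind

theorem dist_le_of_dist_eq (hhyp : GraphHyp Γ δ) {p x y z : V}
    (hx : Γ.dist x z = Γ.dist x p) (hy : Γ.dist y z = Γ.dist y p) :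
    (Γ.dist p z : ℝ) ≤ 2 * gGP Γ p x y + 2 * δ := by
  have := hhyp p x y z
  rw [gGP_eq_half_dist_of_dist_eq hx, gGP_eq_half_dist_of_dist_eq hy, min_self] at this
  linarith

theorem dist_smul_le {G : Type*} [Group G] [MulAction G V] (hhyp : GraphHyp Γ δ)
    (hconn : Γ.Connected) (hact : ∀ (g : G) (u w : V), Γ.Adj u w → Γ.Adj (g • u) (g • w))
    {a : G} {x y : V} (hx : a • x = x) (hy : a • y = y) (p : V) :
    (Γ.dist p (a • p) : ℝ) ≤ 2 * gGP Γ p x y + 2 * δ := by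
  refine hhyp.dist_le_of_dist_eq ?_ ?_
  · conv_lhs => rw [← hx]
    exact hconn.dist_smul hact a x p
  · conv_lhs => rw [← hy]
    exact hconn.dist_smul hact a y p

theorem eventually_gGP_le_of_not_gEquivAtInf (hhyp : GraphHyp Γ δ) {p : V} {u w : ℕ → V}
    (hu : gConvAtInf Γ p u) (hw : gConvAtInf Γ p w) (hne : ¬ gEquivAtInf Γ p u w) :
    ∃ M : ℝ, ∃ N : ℕ, ∀ n m, N ≤ n → N ≤ m → gGP Γ p (u n) (w m) ≤ M := by
  rw [gEquivAtInf] at hne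
  push Not at hne
  obtain ⟨M, hM⟩ := hne
  obtain ⟨Nu, hNu⟩ := hu (M + 2 * δ)
  obtain ⟨Nw, hNw⟩ := hw (M + 2 * δ)
  refine ⟨M + 2 * δ, max Nu Nw, fun n m hn hm => le_of_not_gt fun hnm => ?_⟩
  obtain ⟨i, j, hi, hj, hij⟩ := hM (max Nu Nw)
  have hin := hNu i n (le_of_max_le_left hi) (le_of_max_le_left hn)
  have hmj := hNw m j (le_of_max_le_right hm) (le_of_max_le_right hj)
  have := hhyp.min_min_sub_two_mul_le p (u i) (u n) (w m) (w j)
  grind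

theorem exists_gGP_le_of_not_gEquivAtInf (hhyp : GraphHyp Γ δ) (hconn : Γ.Connected) {p : V}
    {u w : ℕ → V} (hu : gConvAtInf Γ p u) (hw : gConvAtInf Γ p w)
    (hne : ¬ gEquivAtInf Γ p u w) :
    ∃ C : ℝ, ∀ n m, gGP Γ p (u n) (w m) ≤ C := by
  obtain ⟨M, N, hM⟩ := hhyp.eventually_gGP_le_of_not_gEquivAtInf hu hw hne
  -- for the finitely many indices below `N`, the Gromov product is bounded by a distance
  let D (z : ℕ → V) : ℕ := (Finset.range N).sup fun k => Γ.dist p (z k)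
  have hD (z : ℕ → V) {k : ℕ} (hk : k < N) : (Γ.dist p (z k) : ℝ) ≤ D z := by
    exact_mod_cast Finset.le_sup (f := fun k => Γ.dist p (z k)) (Finset.mem_range.2 hk)
  refine ⟨max M (max (D u) (D w)), fun n m => ?_⟩
  rcases Nat.lt_or_ge n N with hn | hn
  · have := (gGP_le_dist_left hconn p (u n) (w m)).trans (hD u hn)
    exact this.trans (by simp)
  rcases Nat.lt_or_ge m N with hm | hm
  · have := (gGP_le_dist_right hconn p (u n) (w m)).trans (hD w hm)
    exact this.trans (by simp)
  exact (hM n m hn hm).trans (le_max_left _ _)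

end GraphHyp

end Gromov

theorem bounded_orbit_of_distinct_attracting_points_general
    {V G : Type*} (Γ : SimpleGraph V)
    [Group G] [MulAction G V]
    (δ : ℝ)
    (hconn : Γ.Connected) (hlf : ∀ v : V, (Γ.neighborSet v).Finite) (hhyp : GraphHyp Γ δ)
    (hact : ∀ (g : G) (u w : V), Γ.Adj u w → Γ.Adj (g • u) (g • w))
    (g h : G)
    (hg : ∀ w : V, gConvAtInf Γ w (fun n => g ^ n • w) ∧
      gConvAtInf Γ w (fun n => (g ^ n)⁻¹ • w) ∧
      ¬ gEquivAtInf Γ w (fun n => g ^ n • w) (fun n => (g ^ n)⁻¹ • w))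
    (hh : ∀ w : V, gConvAtInf Γ w (fun n => h ^ n • w) ∧
      gConvAtInf Γ w (fun n => (h ^ n)⁻¹ • w) ∧
      ¬ gEquivAtInf Γ w (fun n => h ^ n • w) (fun n => (h ^ n)⁻¹ • w))
    (hne : ∀ w : V, ¬ gEquivAtInf Γ w (fun n => g ^ n • w) (fun n => h ^ n • w)) :
    ∀ v : V, ∃ K : ℕ, ∀ n m : ℕ,
      {w : V | ∃ a : G, a ∈ MulAction.stabilizer G (g ^ n • v) ⊓
          MulAction.stabilizer G (h ^ m • v) ∧ a • v = w}.Finite ∧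
      {w : V | ∃ a : G, a ∈ MulAction.stabilizer G (g ^ n • v) ⊓
          MulAction.stabilizer G (h ^ m • v) ∧ a • v = w}.ncard ≤ K := by
  intro v
  obtain ⟨C, hC⟩ := hhyp.exists_gGP_le_of_not_gEquivAtInf hconn (hg v).1 (hh v).1 (hne v)
  set R := ⌈2 * C + 2 * δ⌉₊
  have hball := hconn.finite_setOf_dist_le hlf v R
  refine ⟨{w : V | Γ.dist v w ≤ R}.ncard, fun n m => ?_⟩
  have hsub : {w : V | ∃ a : G, a ∈ MulAction.stabilizer G (g ^ n • v) ⊓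
      MulAction.stabilizer G (h ^ m • v) ∧ a • v = w} ⊆ {w : V | Γ.dist v w ≤ R} := by
    rintro _ ⟨a, ⟨hag, hah⟩, rfl⟩
    have hdist := hhyp.dist_smul_le hconn hact hag hah v
    have hR : (Γ.dist v (a • v) : ℝ) ≤ R := by
      linarith [hC n m, Nat.le_ceil (2 * C + 2 * δ)]
    exact_mod_cast hR
  exact ⟨hball.subset hsub, Set.ncard_le_ncard hsub hball⟩

/-- For `G` t.d.l.c. acting vertex transitively with compact open stabilisers on a connected
locally finite `δ`-hyperbolic graph, and `g, h ∈ G` hyperbolic with `ω₊(g) ≠ ω₊(h)`: for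
each vertex `v` there is `K` bounding, for all `n, m`, the size of the orbit of `v` under
the pointwise stabiliser of `{gⁿ(v), hᵐ(v)}`. -/
theorem bounded_orbit_of_distinct_attracting_points
    {V G : Type*} (Γ : SimpleGraph V)
    [Group G] [TopologicalSpace G] [IsTopologicalGroup G] [T2Space G]
    [LocallyCompactSpace G] [TotallyDisconnectedSpace G] [MulAction G V]
    (δ : ℝ) (hδ : 0 ≤ δ)
    (hconn : Γ.Connected) (hlf : ∀ v : V, (Γ.neighborSet v).Finite) (hhyp : GraphHyp Γ δ)
    (hact : ∀ (g : G) (u w : V), Γ.Adj u w → Γ.Adj (g • u) (g • w))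
    (htrans : ∀ u w : V, ∃ g : G, g • u = w)
    (hstab : ∀ v : V, IsCompact ((MulAction.stabilizer G v : Subgroup G) : Set G) ∧
      IsOpen ((MulAction.stabilizer G v : Subgroup G) : Set G))
    (g h : G)
    (hg : ∀ w : V, gConvAtInf Γ w (fun n => g ^ n • w) ∧
      gConvAtInf Γ w (fun n => (g ^ n)⁻¹ • w) ∧
      ¬ gEquivAtInf Γ w (fun n => g ^ n • w) (fun n => (g ^ n)⁻¹ • w))
    (hh : ∀ w : V, gConvAtInf Γ w (fun n => h ^ n • w) ∧
      gConvAtInf Γ w (fun n => (h ^ n)⁻¹ • w) ∧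
      ¬ gEquivAtInf Γ w (fun n => h ^ n • w) (fun n => (h ^ n)⁻¹ • w))
    (hne : ∀ w : V, ¬ gEquivAtInf Γ w (fun n => g ^ n • w) (fun n => h ^ n • w)) :
    ∀ v : V, ∃ K : ℕ, ∀ n m : ℕ,
      {w : V | ∃ a : G, a ∈ MulAction.stabilizer G (g ^ n • v) ⊓
          MulAction.stabilizer G (h ^ m • v) ∧ a • v = w}.Finite ∧
      {w : V | ∃ a : G, a ∈ MulAction.stabilizer G (g ^ n • v) ⊓
          MulAction.stabilizer G (h ^ m • v) ∧ a • v = w}.ncard ≤ K :=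
  bounded_orbit_of_distinct_attracting_points_general Γ δ hconn hlf hhyp hact g h hg hh hne
end
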